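/- arXiv:1503.08548 — 2 statements merged into one kernel-verified Lean document; each statement's English description precedes it below -/
import Mathlib

section
/- Any nonnegative measurable solution U of the system U(x) = 1 + p ∫_E U(y) ν(dy) + (1-p) ∫_E U(y) {}_H P(x,dy) for x ∉ H, U(x) = 0 for x ∈ H, satisfies U(x) ≥ V₁(x) Σ_{t=0}^n (p ∫_E V₁(y) ν(dy))^t for every n ≥ 0 and every x ∈ E, where V₁(x) = Σ_{t=0}^∞ (1-p)^t {}_H P^t(x,E) for x ∉ H and V₁ = 0 on H. Consequently U(x) ≥ V₁(x) Σ_{t=0}^∞ (p ∫ V₁ dν)^t, so the latter is the minimal nonnegative solution. -/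
open MeasureTheory ProbabilityTheory ENNReal

/-- The `t`-step iterate `P^t` of a transition kernel, with `P^0(x,·) = δ_x`. -/
noncomputable def iterKernel {E : Type*} [MeasurableSpace E] (P : Kernel E E) :
    ℕ → Kernel E E
  | 0 => Kernel.id
  | t + 1 => P ∘ₖ iterKernel P t

/-- The iterates of the taboo kernel `{}_H P(x,Γ) := P(x, Γ \ H)`, given the
complement `Hᶜ` as a measurable set; `{}_H P^0(x,Γ) = δ_x(Γ \ H)`, so that
`{}_H P^0(x,E) = 1{x ∉ H}`. -/
noncomputable def tabooIter {E : Type*} [MeasurableSpace E] (P : Kernel E E)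
    {Hc : Set E} (hHc : MeasurableSet Hc) : ℕ → Kernel E E
  | 0 => Kernel.id.restrict hHc
  | t + 1 => (P.restrict hHc) ∘ₖ tabooIter P hHc t
open scoped Classical

/-! `V₁` is the minimal solution of `V = 1 + (1-p) {}_H P V` off `H` (its partial sums are the
Picard iterates from `0`), so every supersolution of `W = b + (1-p) {}_H P W` dominates `b V₁`.
A solution `U` is such a supersolution with `b = 1 + p ∫ U dν`, and `U ≥ a V₁` gives
`p ∫ U dν ≥ (p ∫ V₁ dν) a`; iterating `a ↦ 1 + (p ∫ V₁ dν) a` from `a = 0` produces the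
partial geometric sums. -/

section TabooIter

variable {E : Type*} [MeasurableSpace E] (P : Kernel E E) {s : Set E} (hs : MeasurableSet s)

lemma id_restrict_comp_restrict :
    Kernel.id.restrict hs ∘ₖ P.restrict hs = P.restrict hs := by
  ext1 x
  rw [Kernel.comp_restrict, Kernel.id_comp, Kernel.restrict_apply, Kernel.restrict_apply,
    Measure.restrict_restrict hs, Set.inter_self]

/-- First-step decomposition of the taboo iterates (the definition decomposes at the last step). -/
lemma tabooIter_succ_eq_comp (t : ℕ) :
    tabooIter P hs (t + 1) = (tabooIter P hs t ∘ₖ P.restrict hs) ∘ₖ Kernel.id.restrict hs := by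
  induction t with
  | zero =>
    change P.restrict hs ∘ₖ _ = (Kernel.id.restrict hs ∘ₖ P.restrict hs) ∘ₖ _
    rw [id_restrict_comp_restrict]
    rfl
  | succ t ih =>
    change P.restrict hs ∘ₖ tabooIter P hs (t + 1) = (P.restrict hs ∘ₖ tabooIter P hs t ∘ₖ _) ∘ₖ _
    rw [ih, Kernel.comp_assoc, Kernel.comp_assoc, Kernel.comp_assoc]

lemma tabooIter_apply_of_notMem {x : E} (hx : x ∉ s) (t : ℕ) : tabooIter P hs t x = 0 := by
  have hdirac : Kernel.id.restrict hs x = 0 := by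
    rw [Kernel.restrict_apply, Kernel.id_apply, restrict_dirac' hs, if_neg hx]
  cases t with
  | zero => exact hdirac
  | succ t => rw [tabooIter_succ_eq_comp, Kernel.comp_apply, hdirac, Measure.bind_zero_left]

lemma tabooIter_zero_apply_univ {x : E} (hx : x ∈ s) : tabooIter P hs 0 x Set.univ = 1 := by
  change Kernel.id.restrict hs x Set.univ = 1
  rw [Kernel.restrict_apply, Kernel.id_apply, restrict_dirac' hs, if_pos hx, measure_univ]

lemma tabooIter_succ_apply {x : E} (hx : x ∈ s) (t : ℕ) :
    tabooIter P hs (t + 1) x = (P.restrict hs x).bind (tabooIter P hs t) := by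
  rw [tabooIter_succ_eq_comp, Kernel.comp_apply, Kernel.restrict_apply, Kernel.id_apply,
    restrict_dirac' hs, if_pos hx, Measure.dirac_bind (Kernel.measurable _), Kernel.comp_apply]

lemma tabooIter_succ_apply_univ {x : E} (hx : x ∈ s) (t : ℕ) :
    tabooIter P hs (t + 1) x Set.univ = ∫⁻ y, tabooIter P hs t y Set.univ ∂(P.restrict hs x) := by
  rw [tabooIter_succ_apply P hs hx, Measure.bind_apply MeasurableSet.univ (Kernel.aemeasurable _)]

end TabooIter

section TabooGreen

variable {E : Type*} [MeasurableSpace E] (P : Kernel E E) {s : Set E} (hs : MeasurableSet s)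

noncomputable def tabooGreenPartial (q : ℝ≥0∞) (m : ℕ) (x : E) : ℝ≥0∞ :=
  ∑ t ∈ Finset.range m, q ^ t * tabooIter P hs t x Set.univ

noncomputable def tabooGreen (q : ℝ≥0∞) (x : E) : ℝ≥0∞ :=
  ∑' t : ℕ, q ^ t * tabooIter P hs t x Set.univ

lemma measurable_tabooGreenPartial (q : ℝ≥0∞) (m : ℕ) :
    Measurable (tabooGreenPartial P hs q m) :=
  Finset.measurable_sum _ fun _ _ => (Kernel.measurable_coe _ MeasurableSet.univ).const_mul _

lemma measurable_tabooGreen (q : ℝ≥0∞) : Measurable (tabooGreen P hs q) :=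
  Measurable.tsum fun _ => (Kernel.measurable_coe _ MeasurableSet.univ).const_mul _

lemma tabooGreen_eq_iSup (q : ℝ≥0∞) (x : E) :
    tabooGreen P hs q x = ⨆ m, tabooGreenPartial P hs q m x :=
  ENNReal.tsum_eq_iSup_nat

lemma tabooGreen_apply_of_notMem (q : ℝ≥0∞) {x : E} (hx : x ∉ s) : tabooGreen P hs q x = 0 := by
  simp [tabooGreen, tabooIter_apply_of_notMem P hs hx]

lemma tabooGreenPartial_apply_of_notMem (q : ℝ≥0∞) (m : ℕ) {x : E} (hx : x ∉ s) :
    tabooGreenPartial P hs q m x = 0 := by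
  simp [tabooGreenPartial, tabooIter_apply_of_notMem P hs hx]

lemma tabooGreenPartial_succ_apply (q : ℝ≥0∞) (m : ℕ) {x : E} (hx : x ∈ s) :
    tabooGreenPartial P hs q (m + 1) x
      = 1 + q * ∫⁻ y, tabooGreenPartial P hs q m y ∂(P.restrict hs x) := by
  have hmeas (t : ℕ) : Measurable fun y => tabooIter P hs t y Set.univ :=
    Kernel.measurable_coe _ MeasurableSet.univ
  simp only [tabooGreenPartial]
  rw [Finset.sum_range_succ', pow_zero, one_mul, tabooIter_zero_apply_univ P hs hx, add_comm,
    lintegral_finsetSum _ fun t _ => (hmeas t).const_mul _, Finset.mul_sum]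
  congr 1
  refine Finset.sum_congr rfl fun t _ => ?_
  rw [tabooIter_succ_apply_univ P hs hx, lintegral_const_mul _ (hmeas t), pow_succ', mul_assoc]

/-- Minimality of the taboo Green function among supersolutions. -/
lemma tabooGreen_mul_le {W : E → ℝ≥0∞} {b q : ℝ≥0∞}
    (hW : ∀ x ∈ s, b + q * ∫⁻ y, W y ∂(P.restrict hs x) ≤ W x) (x : E) :
    tabooGreen P hs q x * b ≤ W x := by
  suffices h : ∀ m x, tabooGreenPartial P hs q m x * b ≤ W x by
    rw [tabooGreen_eq_iSup, ENNReal.iSup_mul]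
    exact iSup_le fun m => h m x
  intro m
  induction m with
  | zero => simp [tabooGreenPartial]
  | succ m ih =>
    intro x
    by_cases hx : x ∈ s
    · calc tabooGreenPartial P hs q (m + 1) x * b
          = b + q * ∫⁻ y, tabooGreenPartial P hs q m y * b ∂(P.restrict hs x) := by
            rw [tabooGreenPartial_succ_apply P hs q m hx,
              lintegral_mul_const _ (measurable_tabooGreenPartial P hs q m)]
            ring
        _ ≤ b + q * ∫⁻ y, W y ∂(P.restrict hs x) := by gcongr with y; exact ih y
        _ ≤ W x := hW x hx
    · simp [tabooGreenPartial_apply_of_notMem P hs q _ hx]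

end TabooGreen

section GeometricIteration

variable {α : Type*} {V U : α → ℝ≥0∞} {c : ℝ≥0∞}

lemma mul_geom_sum_le_of_step
    (step : ∀ a, (∀ x, V x * a ≤ U x) → ∀ x, V x * (1 + c * a) ≤ U x) (n : ℕ) (x : α) :
    V x * ∑ t ∈ Finset.range n, c ^ t ≤ U x := by
  induction n generalizing x with
  | zero => simp
  | succ n ih => rw [geom_sum_succ, add_comm]; exact step _ ih x

lemma mul_tsum_geometric_le_of_step
    (step : ∀ a, (∀ x, V x * a ≤ U x) → ∀ x, V x * (1 + c * a) ≤ U x) (x : α) :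
    V x * ∑' t : ℕ, c ^ t ≤ U x := by
  rw [ENNReal.tsum_eq_iSup_nat, ENNReal.mul_iSup]
  exact iSup_le fun n => mul_geom_sum_le_of_step step n x

end GeometricIteration

theorem stmt7_general {E : Type*} [MeasurableSpace E]
    (P : Kernel E E)
    (ν : Measure E)
    (p : ℝ≥0∞)
    (H : Set E) (hH : MeasurableSet H)
    (U : E → ℝ≥0∞)
    (hUeq : ∀ x ∉ H, U x = 1 + p * ∫⁻ y, U y ∂ν +
      (1 - p) * ∫⁻ y, U y ∂((P.restrict hH.compl) x))
    (V₁ : E → ℝ≥0∞)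
    (hV₁ : ∀ x, V₁ x = if x ∈ H then 0 else
      ∑' t : ℕ, (1 - p) ^ t * tabooIter P hH.compl t x Set.univ) :
    (∀ (n : ℕ) (x : E),
      V₁ x * ∑ t ∈ Finset.range (n + 1), (p * ∫⁻ y, V₁ y ∂ν) ^ t ≤ U x) ∧
    ∀ x : E, V₁ x * ∑' t : ℕ, (p * ∫⁻ y, V₁ y ∂ν) ^ t ≤ U x := by
  have hV : V₁ = tabooGreen P hH.compl (1 - p) := funext fun x => by
    rw [hV₁]
    split_ifs with hx
    · exact (tabooGreen_apply_of_notMem P hH.compl _ (not_not.mpr hx)).symm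
    · rfl
  have step (a : ℝ≥0∞) (ha : ∀ x, V₁ x * a ≤ U x) (x : E) :
      V₁ x * (1 + (p * ∫⁻ y, V₁ y ∂ν) * a) ≤ U x := by
    have hint : (p * ∫⁻ y, V₁ y ∂ν) * a ≤ p * ∫⁻ y, U y ∂ν := by
      rw [mul_assoc, ← lintegral_mul_const _ (hV ▸ measurable_tabooGreen P hH.compl _)]
      gcongr with y
      exact ha y
    rw [hV] at hint ⊢
    refine tabooGreen_mul_le P hH.compl (fun y hy => ?_) x
    rw [hUeq y hy]
    gcongr 1 + ?_ + _
  exact ⟨fun n => mul_geom_sum_le_of_step step (n + 1), mul_tsum_geometric_le_of_step step⟩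

/-- Any nonnegative measurable solution `U` of
`U(x) = 1 + p ∫ U dν + (1-p) ∫ U(y) {}_H P(x,dy)` for `x ∉ H`, `U = 0` on `H`
(values in `[0,∞]`), dominates `V₁(x) Σ_{t=0}^n (p ∫ V₁ dν)^t` for every `n`,
hence also `V₁(x) Σ_{t=0}^∞ (p ∫ V₁ dν)^t`; thus the latter is the minimal
nonnegative solution. -/
theorem stmt7 {E : Type*} [MeasurableSpace E]
    (P : Kernel E E) [IsMarkovKernel P]
    (ν : Measure E) [IsProbabilityMeasure ν]
    (p : ℝ≥0∞) (hp0 : 0 < p) (hp1 : p < 1)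
    (H : Set E) (hH : MeasurableSet H)
    (U : E → ℝ≥0∞) (hU : Measurable U)
    (hUeq : ∀ x ∉ H, U x = 1 + p * ∫⁻ y, U y ∂ν +
      (1 - p) * ∫⁻ y, U y ∂((P.restrict hH.compl) x))
    (hUH : ∀ x ∈ H, U x = 0)
    (V₁ : E → ℝ≥0∞)
    (hV₁ : ∀ x, V₁ x = if x ∈ H then 0 else
      ∑' t : ℕ, (1 - p) ^ t * tabooIter P hH.compl t x Set.univ) :
    (∀ (n : ℕ) (x : E),
      V₁ x * ∑ t ∈ Finset.range (n + 1), (p * ∫⁻ y, V₁ y ∂ν) ^ t ≤ U x) ∧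
    ∀ x : E, V₁ x * ∑' t : ℕ, (p * ∫⁻ y, V₁ y ∂ν) ^ t ≤ U x :=
  stmt7_general P ν p H hH U hUeq V₁ hV₁
end

section
/- The expected hitting time of the restarted chain to the target set H is finite for q-almost every initial state if and only if q(H) > 0; moreover these are equivalent to finiteness for every initial state, and to uniform boundedness sup_{x∈E} E_x[η_H] < ∞. -/
/-!
If `q(H) > 0`, let `W` be the `(1-p)`-discounted expected time the `P`-chain spends outside `H`
before entering it and `A = ∫ W dν`. Each restart contributes an independent excursion, so
`U = W / (1 - p A)` solves the hitting-time equation, and `p A + q(H) ≤ 1` shows that `U` is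
bounded by `(p (1 - p A))⁻¹`; minimality of `V` gives `V ≤ U`.

If `q(H) = 0`, then `ν P^t (H) = 0` for all `t`. Integrating the equation against `ν P^t` gives
`L_t = 1 + p L_0 + (1-p) L_{t+1}` for `L_t = ∫ V d(ν P^t)`, hence `L_0 ≥ (1 + p L_0) / p`, which
forces `∫ V dν = ∞`. Then `V = ∞` off `H`, a set of full `q`-measure.
-/

open MeasureTheory ProbabilityTheory ENNReal

namespace ENNReal

lemma one_add_mul_inv_one_sub (a : ℝ≥0∞) : 1 + a * (1 - a)⁻¹ = (1 - a)⁻¹ :=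
  calc 1 + a * (1 - a)⁻¹ = a ^ 0 + ∑' n, a ^ (n + 1) := by
        rw [pow_zero, ENNReal.tsum_geometric_add_one]
    _ = (1 - a)⁻¹ := by rw [← tsum_eq_zero_add' ENNReal.summable, ENNReal.tsum_geometric]

lemma tsum_mul_geometric_one_sub {p : ℝ≥0∞} (hp0 : p ≠ 0) (hp1 : p ≤ 1) :
    ∑' t : ℕ, p * (1 - p) ^ t = 1 := by
  rw [ENNReal.tsum_mul_left, ENNReal.tsum_geometric, ENNReal.sub_sub_cancel one_ne_top hp1,
    ENNReal.mul_inv_cancel hp0 (ne_top_of_le_ne_top one_ne_top hp1)]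

lemma mul_inv_one_sub_le_of_le {L : ℕ → ℝ≥0∞} {K r : ℝ≥0∞}
    (h : ∀ t, K + r * L (t + 1) ≤ L t) : K * (1 - r)⁻¹ ≤ L 0 := by
  have partial_le : ∀ n t, K * ∑ k ∈ Finset.range n, r ^ k ≤ L t := by
    intro n
    induction n with
    | zero => simp
    | succ n ih =>
      intro t
      calc K * ∑ k ∈ Finset.range (n + 1), r ^ k
          = K + r * (K * ∑ k ∈ Finset.range n, r ^ k) := by
            simp only [Finset.sum_range_succ', pow_succ', ← Finset.mul_sum]
            ring
        _ ≤ K + r * L (t + 1) := by gcongr; exact ih (t + 1)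
        _ ≤ L t := h t
  rw [← ENNReal.tsum_geometric, ENNReal.tsum_eq_iSup_nat, ENNReal.mul_iSup]
  exact iSup_le fun n => partial_le n 0

end ENNReal

lemma ProbabilityTheory.Kernel.lintegral_restrict_compl_of_eq_zero_on {α β : Type*}
    [MeasurableSpace α] [MeasurableSpace β] (κ : Kernel α β) {H : Set β} (hH : MeasurableSet H)
    {f : β → ℝ≥0∞} (hf : ∀ y ∈ H, f y = 0) (x : α) :
    ∫⁻ y, f y ∂(κ.restrict hH.compl x) = ∫⁻ y, f y ∂(κ x) := by
  rw [Kernel.restrict_apply]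
  exact setLIntegral_eq_of_support_subset fun y hy hyH => hy (hf y hyH)

section Chain

variable {E : Type*} [MeasurableSpace E] {P : Kernel E E} {H : Set E}

instance isMarkovKernel_iterKernel (P : Kernel E E) [IsMarkovKernel P] (t : ℕ) :
    IsMarkovKernel (iterKernel P t) := by
  induction t with
  | zero => exact inferInstanceAs (IsMarkovKernel Kernel.id)
  | succ t ih => exact inferInstanceAs (IsMarkovKernel (P ∘ₖ iterKernel P t))

lemma iterKernel_succ' (P : Kernel E E) (t : ℕ) :
    iterKernel P (t + 1) = iterKernel P t ∘ₖ P := by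
  induction t with
  | zero => exact (Kernel.comp_id P).trans (Kernel.id_comp P).symm
  | succ t ih =>
    change P ∘ₖ iterKernel P (t + 1) = (P ∘ₖ iterKernel P t) ∘ₖ P
    rw [ih, Kernel.comp_assoc]

/-- The probability that the chain started at `x` stays in `Hᶜ` at all times `0, …, t`. -/
noncomputable def avoidProb (P : Kernel E E) (H : Set E) : ℕ → E → ℝ≥0∞
  | 0 => Hᶜ.indicator 1
  | t + 1 => Hᶜ.indicator fun x => ∫⁻ y, avoidProb P H t y ∂(P x)

lemma measurable_avoidProb (hH : MeasurableSet H) : ∀ t, Measurable (avoidProb P H t)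
  | 0 => measurable_one.indicator hH.compl
  | t + 1 => (measurable_avoidProb hH t).lintegral_kernel.indicator hH.compl

lemma avoidProb_of_mem {x : E} (hx : x ∈ H) (t : ℕ) : avoidProb P H t x = 0 := by
  cases t <;> exact Set.indicator_of_notMem (Set.notMem_compl_iff.2 hx) _

lemma avoidProb_zero_of_notMem {x : E} (hx : x ∉ H) : avoidProb P H 0 x = 1 :=
  Set.indicator_of_mem hx _

lemma avoidProb_succ_of_notMem {x : E} (hx : x ∉ H) (t : ℕ) :
    avoidProb P H (t + 1) x = ∫⁻ y, avoidProb P H t y ∂(P x) :=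
  Set.indicator_of_mem hx _

lemma avoidProb_le_iterKernel (hH : MeasurableSet H) (t : ℕ) (x : E) :
    avoidProb P H t x ≤ iterKernel P t x Hᶜ := by
  induction t generalizing x with
  | zero =>
    change Hᶜ.indicator 1 x ≤ Kernel.id x Hᶜ
    rw [Kernel.id_apply, Measure.dirac_apply' x hH.compl]
  | succ t ih =>
    calc avoidProb P H (t + 1) x ≤ ∫⁻ y, avoidProb P H t y ∂(P x) := Set.indicator_le_self _ _ x
      _ ≤ ∫⁻ y, iterKernel P t y Hᶜ ∂(P x) := lintegral_mono ih
      _ = iterKernel P (t + 1) x Hᶜ := by rw [iterKernel_succ', Kernel.comp_apply' _ _ _ hH.compl]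

lemma avoidProb_add_iterKernel_le_one [IsMarkovKernel P] (hH : MeasurableSet H) (t : ℕ) (x : E) :
    avoidProb P H t x + iterKernel P t x H ≤ 1 :=
  calc avoidProb P H t x + iterKernel P t x H ≤ iterKernel P t x Hᶜ + iterKernel P t x H := by
        gcongr; exact avoidProb_le_iterKernel hH t x
    _ = 1 := by rw [add_comm, measure_add_measure_compl hH, measure_univ]

lemma avoidProb_le_one [IsMarkovKernel P] (hH : MeasurableSet H) (t : ℕ) (x : E) :
    avoidProb P H t x ≤ 1 :=
  le_of_add_le_left (avoidProb_add_iterKernel_le_one hH t x)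

/-- The expected `r`-discounted time the chain started at `x` spends in `Hᶜ` before entering `H`. -/
noncomputable def discountedAvoidTime (P : Kernel E E) (H : Set E) (r : ℝ≥0∞) (x : E) : ℝ≥0∞ :=
  ∑' t, r ^ t * avoidProb P H t x

variable {r : ℝ≥0∞}

lemma measurable_discountedAvoidTime (hH : MeasurableSet H) :
    Measurable (discountedAvoidTime P H r) :=
  Measurable.tsum fun t => (measurable_avoidProb hH t).const_mul _

lemma discountedAvoidTime_of_mem {x : E} (hx : x ∈ H) : discountedAvoidTime P H r x = 0 := by
  simp [discountedAvoidTime, avoidProb_of_mem hx]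

lemma discountedAvoidTime_of_notMem (hH : MeasurableSet H) {x : E} (hx : x ∉ H) :
    discountedAvoidTime P H r x = 1 + r * ∫⁻ y, discountedAvoidTime P H r y ∂(P x) := by
  simp only [discountedAvoidTime]
  rw [tsum_eq_zero_add' ENNReal.summable, pow_zero, one_mul, avoidProb_zero_of_notMem hx,
    lintegral_tsum fun t => ((measurable_avoidProb hH t).const_mul _).aemeasurable,
    ← ENNReal.tsum_mul_left]
  congr 1
  refine tsum_congr fun t => ?_
  rw [avoidProb_succ_of_notMem hx, lintegral_const_mul _ (measurable_avoidProb hH t), pow_succ',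
    mul_assoc]

lemma discountedAvoidTime_le [IsMarkovKernel P] (hH : MeasurableSet H) (x : E) :
    discountedAvoidTime P H r x ≤ (1 - r)⁻¹ := by
  rw [← ENNReal.tsum_geometric]
  exact ENNReal.tsum_le_tsum fun t => mul_le_of_le_one_right' (avoidProb_le_one hH t x)

end Chain

section Restart

variable {E : Type*} [MeasurableSpace E] {P : Kernel E E} {ν : Measure E} {p : ℝ≥0∞}
  {H : Set E} {q : Measure E}

def IsHittingTimeEq (P : Kernel E E) (ν : Measure E) (p : ℝ≥0∞) (H : Set E) (U : E → ℝ≥0∞) :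
    Prop :=
  (∀ x ∉ H, U x = 1 + p * ∫⁻ y, U y ∂ν + (1 - p) * ∫⁻ y, U y ∂(P x)) ∧ ∀ x ∈ H, U x = 0

lemma isHittingTimeEq_iff_restrict (hH : MeasurableSet H) {U : E → ℝ≥0∞} :
    ((∀ x ∉ H, U x = 1 + p * ∫⁻ y, U y ∂ν +
        (1 - p) * ∫⁻ y, U y ∂((P.restrict hH.compl) x)) ∧ ∀ x ∈ H, U x = 0) ↔
      IsHittingTimeEq P ν p H U := by
  refine and_congr_left fun hU => forall₂_congr fun x _ => ?_
  rw [P.lintegral_restrict_compl_of_eq_zero_on hH hU]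

lemma exists_bounded_isHittingTimeEq [IsMarkovKernel P] (hp0 : p ≠ 0) (hp1 : p ≤ 1)
    (hH : MeasurableSet H) (hA : p * ∫⁻ y, discountedAvoidTime P H (1 - p) y ∂ν < 1) :
    ∃ U, Measurable U ∧ IsHittingTimeEq P ν p H U ∧ ⨆ x, U x < ⊤ := by
  set W := discountedAvoidTime P H (1 - p)
  set c := (1 - p * ∫⁻ y, W y ∂ν)⁻¹
  have hWm : Measurable W := measurable_discountedAvoidTime hH
  refine ⟨fun x => c * W x, hWm.const_mul c, ⟨fun x hx => ?_, fun x hx => ?_⟩, ?_⟩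
  · have hc : c = 1 + p * (∫⁻ y, W y ∂ν) * c := (ENNReal.one_add_mul_inv_one_sub _).symm
    calc c * W x = (1 + p * (∫⁻ y, W y ∂ν) * c) + (1 - p) * (c * ∫⁻ y, W y ∂(P x)) := by
          have hWx : W x = 1 + (1 - p) * ∫⁻ y, W y ∂(P x) := discountedAvoidTime_of_notMem hH hx
          rw [← hc, hWx]
          ring
      _ = _ := by rw [lintegral_const_mul c hWm, lintegral_const_mul c hWm]; ring
  · simp [W, discountedAvoidTime_of_mem hx]
  · have hc : c ≠ ⊤ := ENNReal.inv_ne_top.2 (tsub_pos_of_lt hA).ne'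
    have hU : ∀ x, c * W x ≤ c * p⁻¹ := fun x => by
      gcongr
      simpa [ENNReal.sub_sub_cancel one_ne_top hp1] using discountedAvoidTime_le (r := 1 - p) hH x
    exact (iSup_le hU).trans_lt
      (ENNReal.mul_lt_top hc.lt_top (ENNReal.inv_lt_top.2 (pos_iff_ne_zero.2 hp0)))

variable (hq : ∀ Γ : Set E, MeasurableSet Γ →
    q Γ = ∫⁻ y, ∑' t : ℕ, p * (1 - p) ^ t * iterKernel P t y Γ ∂ν)
include hq

lemma apply_eq_tsum_comp {Γ : Set E} (hΓ : MeasurableSet Γ) :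
    q Γ = ∑' t : ℕ, p * (1 - p) ^ t * (iterKernel P t ∘ₘ ν) Γ := by
  rw [hq Γ hΓ, lintegral_tsum fun t => ((Kernel.measurable_coe _ hΓ).const_mul _).aemeasurable]
  refine tsum_congr fun t => ?_
  rw [lintegral_const_mul _ (Kernel.measurable_coe _ hΓ),
    Measure.bind_apply hΓ (Kernel.measurable _).aemeasurable]

lemma isProbabilityMeasure_of_eq_lintegral_tsum [IsProbabilityMeasure ν] [IsMarkovKernel P]
    (hp0 : p ≠ 0) (hp1 : p ≤ 1) : IsProbabilityMeasure q :=
  ⟨by simp [apply_eq_tsum_comp hq MeasurableSet.univ, ENNReal.tsum_mul_geometric_one_sub hp0 hp1]⟩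

lemma comp_apply_eq_zero_of_apply_eq_zero (hp0 : p ≠ 0) (hp1 : p < 1) (hH : MeasurableSet H)
    (hqH : q H = 0) (t : ℕ) : (iterKernel P t ∘ₘ ν) H = 0 := by
  rw [apply_eq_tsum_comp hq hH] at hqH
  refine (mul_eq_zero.1 (ENNReal.tsum_eq_zero.1 hqH t)).resolve_left ?_
  exact mul_ne_zero hp0 (pow_ne_zero t (tsub_pos_of_lt hp1).ne')

lemma mul_lintegral_discountedAvoidTime_add_le_one [IsProbabilityMeasure ν] [IsMarkovKernel P]
    (hp0 : p ≠ 0) (hp1 : p ≤ 1) (hH : MeasurableSet H) :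
    p * ∫⁻ y, discountedAvoidTime P H (1 - p) y ∂ν + q H ≤ 1 := by
  have hWm : Measurable (discountedAvoidTime P H (1 - p)) := measurable_discountedAvoidTime hH
  have pointwise : ∀ y, p * discountedAvoidTime P H (1 - p) y +
      ∑' t : ℕ, p * (1 - p) ^ t * iterKernel P t y H ≤ 1 := fun y =>
    calc _ = ∑' t : ℕ, p * (1 - p) ^ t * (avoidProb P H t y + iterKernel P t y H) := by
          rw [discountedAvoidTime, ← ENNReal.tsum_mul_left, ← ENNReal.tsum_add]
          exact tsum_congr fun t => by ring
      _ ≤ ∑' t : ℕ, p * (1 - p) ^ t :=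
          ENNReal.tsum_le_tsum fun t =>
            mul_le_of_le_one_right' (avoidProb_add_iterKernel_le_one hH t y)
      _ = 1 := ENNReal.tsum_mul_geometric_one_sub hp0 hp1
  calc _ = ∫⁻ y, (p * discountedAvoidTime P H (1 - p) y +
        ∑' t : ℕ, p * (1 - p) ^ t * iterKernel P t y H) ∂ν := by
        rw [hq H hH, lintegral_add_left (hWm.const_mul p), lintegral_const_mul p hWm]
    _ ≤ ∫⁻ _, 1 ∂ν := lintegral_mono pointwise
    _ = 1 := by simp

lemma mul_lintegral_discountedAvoidTime_lt_one [IsProbabilityMeasure ν] [IsMarkovKernel P]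
    (hp0 : p ≠ 0) (hp1 : p ≤ 1) (hH : MeasurableSet H) (hqH : 0 < q H) :
    p * ∫⁻ y, discountedAvoidTime P H (1 - p) y ∂ν < 1 := by
  have hB := mul_lintegral_discountedAvoidTime_add_le_one hq hp0 hp1 hH
  exact (ENNReal.lt_add_right (ne_top_of_le_ne_top one_ne_top (le_of_add_le_left hB))
    hqH.ne').trans_le hB

omit hq in
lemma lintegral_eq_add_lintegral_comp_of_apply_eq_zero {μ : Measure E} [IsProbabilityMeasure μ]
    (hμH : μ H = 0) {K r : ℝ≥0∞} {V : E → ℝ≥0∞} (hVm : Measurable V)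
    (hV : ∀ x ∉ H, V x = K + r * ∫⁻ y, V y ∂(P x)) :
    ∫⁻ x, V x ∂μ = K + r * ∫⁻ x, V x ∂(P ∘ₘ μ) := by
  have hae : V =ᵐ[μ] fun x => K + r * ∫⁻ y, V y ∂(P x) := by
    filter_upwards [measure_eq_zero_iff_ae_notMem.1 hμH] with x hx using hV x hx
  rw [lintegral_congr_ae hae, lintegral_add_left measurable_const, lintegral_const, measure_univ,
    mul_one, lintegral_const_mul _ hVm.lintegral_kernel,
    Measure.lintegral_bind (Kernel.measurable _).aemeasurable hVm.aemeasurable]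

lemma lintegral_eq_top_of_isHittingTimeEq [IsProbabilityMeasure ν] [IsMarkovKernel P]
    (hp0 : p ≠ 0) (hp1 : p < 1) (hH : MeasurableSet H) (hqH : q H = 0) {V : E → ℝ≥0∞}
    (hVm : Measurable V) (hV : IsHittingTimeEq P ν p H V) : ∫⁻ y, V y ∂ν = ⊤ := by
  set I := ∫⁻ y, V y ∂ν
  have hpt : p ≠ ⊤ := hp1.ne_top
  -- `L t = ∫ V d(ν P^t)` satisfies `L t = (1 + p I) + (1 - p) L (t + 1)` and `L 0 = I`,
  -- so `I ≥ (1 + p I) / p = I + p⁻¹`.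
  have hL := ENNReal.mul_inv_one_sub_le_of_le (K := 1 + p * I) (r := 1 - p)
    (L := fun t => ∫⁻ x, V x ∂(iterKernel P t ∘ₘ ν)) fun t => by
      rw [lintegral_eq_add_lintegral_comp_of_apply_eq_zero
          (comp_apply_eq_zero_of_apply_eq_zero hq hp0 hp1 hH hqH t) hVm hV.1,
        Measure.comp_assoc]
      rfl
  change (1 + p * I) * (1 - (1 - p))⁻¹ ≤ ∫⁻ x, V x ∂(Kernel.id ∘ₘ ν) at hL
  rw [Measure.id_comp, ENNReal.sub_sub_cancel one_ne_top hp1.le, add_mul, one_mul,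
    mul_right_comm, ENNReal.mul_inv_cancel hp0 hpt, one_mul, add_comm] at hL
  by_contra hI
  exact (ENNReal.lt_add_right hI (ENNReal.inv_ne_zero.2 hpt)).not_ge hL

lemma pos_apply_of_ae_lt_top [IsProbabilityMeasure ν] [IsMarkovKernel P]
    (hp0 : p ≠ 0) (hp1 : p < 1) (hH : MeasurableSet H) {V : E → ℝ≥0∞} (hVm : Measurable V)
    (hV : IsHittingTimeEq P ν p H V) (hfin : ∀ᵐ x ∂q, V x < ⊤) : 0 < q H := by
  have := isProbabilityMeasure_of_eq_lintegral_tsum hq hp0 hp1.le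
  refine pos_iff_ne_zero.2 fun hqH => ?_
  have hI := lintegral_eq_top_of_isHittingTimeEq hq hp0 hp1 hH hqH hVm hV
  have hVtop : ∀ x ∉ H, V x = ⊤ := fun x hx => by
    rw [hV.1 x hx, hI, ENNReal.mul_top hp0, add_top, top_add]
  have hHc : q Hᶜ = 0 := measure_mono_null (fun x hx => by simp [hVtop x hx]) (ae_iff.1 hfin)
  exact one_ne_zero (((prob_compl_eq_zero_iff hH).1 hHc).symm.trans hqH)

end Restart

/-- `V x = E_x[η_H]` is encoded by its characterization as the minimal nonnegative solution of
the hitting-time equation (Bertsekas–Shreve, Prop. 9.10). -/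
theorem stmt11_general {E : Type*} [MeasurableSpace E]
    (P : Kernel E E) [IsMarkovKernel P]
    (ν : Measure E) [IsProbabilityMeasure ν]
    (p : ℝ≥0∞) (hp0 : 0 < p) (hp1 : p < 1)
    (H : Set E) (hH : MeasurableSet H)
    (q : Measure E)
    (hq : ∀ Γ : Set E, MeasurableSet Γ →
      q Γ = ∫⁻ y, ∑' t : ℕ, p * (1 - p) ^ t * iterKernel P t y Γ ∂ν)
    (V : E → ℝ≥0∞) (hVmeas : Measurable V)
    (hVeq : ∀ x ∉ H, V x = 1 + p * ∫⁻ y, V y ∂ν +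
      (1 - p) * ∫⁻ y, V y ∂((P.restrict hH.compl) x))
    (hVH : ∀ x ∈ H, V x = 0)
    (hVmin : ∀ U : E → ℝ≥0∞, Measurable U →
      (∀ x ∉ H, U x = 1 + p * ∫⁻ y, U y ∂ν +
        (1 - p) * ∫⁻ y, U y ∂((P.restrict hH.compl) x)) →
      (∀ x ∈ H, U x = 0) → ∀ x, V x ≤ U x) :
    List.TFAE [0 < q H, ∀ x, V x < ⊤, ∀ᵐ x ∂q, V x < ⊤, ⨆ x, V x < ⊤] := by
  have hV : IsHittingTimeEq P ν p H V := (isHittingTimeEq_iff_restrict hH).1 ⟨hVeq, hVH⟩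
  tfae_have 1 → 4 := fun hqH => by
    have hA := mul_lintegral_discountedAvoidTime_lt_one hq hp0.ne' hp1.le hH hqH
    obtain ⟨U, hUm, hU, hUbdd⟩ := exists_bounded_isHittingTimeEq hp0.ne' hp1.le hH hA
    have hUeq := (isHittingTimeEq_iff_restrict hH).2 hU
    exact (iSup_mono (hVmin U hUm hUeq.1 hUeq.2)).trans_lt hUbdd
  tfae_have 4 → 2 := fun h x => (le_iSup V x).trans_lt h
  tfae_have 2 → 3 := fun h => ae_of_all q h
  tfae_have 3 → 1 := pos_apply_of_ae_lt_top hq hp0.ne' hp1 hH hVmeas hV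
  tfae_finish

/-- Equivalence theorem. Here `V x = E_x[η_H]`, the expected hitting time of
`H` by the restarted chain, is encoded by its standard characterization as the
minimal nonnegative solution of the dynamic programming equation
`V(x) = 1 + p ∫ V dν + (1-p) ∫ V(y) {}_H P(x,dy)` for `x ∉ H`, `V = 0` on `H`
(Bertsekas–Shreve, Prop. 9.10). The following are equivalent:
(a) `q(H) > 0`; (b) `V(x) < ∞` for every `x`; (c) `V(x) < ∞` for `q`-a.e. `x`;
(d) `sup_x V(x) < ∞`. -/
theorem stmt11 {E : Type*} [MeasurableSpace E] [Nonempty E]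
    (P : Kernel E E) [IsMarkovKernel P]
    (ν : Measure E) [IsProbabilityMeasure ν]
    (p : ℝ≥0∞) (hp0 : 0 < p) (hp1 : p < 1)
    (H : Set E) (hH : MeasurableSet H)
    (q : Measure E)
    (hq : ∀ Γ : Set E, MeasurableSet Γ →
      q Γ = ∫⁻ y, ∑' t : ℕ, p * (1 - p) ^ t * iterKernel P t y Γ ∂ν)
    (V : E → ℝ≥0∞) (hVmeas : Measurable V)
    (hVeq : ∀ x ∉ H, V x = 1 + p * ∫⁻ y, V y ∂ν +
      (1 - p) * ∫⁻ y, V y ∂((P.restrict hH.compl) x))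
    (hVH : ∀ x ∈ H, V x = 0)
    (hVmin : ∀ U : E → ℝ≥0∞, Measurable U →
      (∀ x ∉ H, U x = 1 + p * ∫⁻ y, U y ∂ν +
        (1 - p) * ∫⁻ y, U y ∂((P.restrict hH.compl) x)) →
      (∀ x ∈ H, U x = 0) → ∀ x, V x ≤ U x) :
    List.TFAE [0 < q H, ∀ x, V x < ⊤, ∀ᵐ x ∂q, V x < ⊤, ⨆ x, V x < ⊤] :=
  stmt11_general P ν p hp0 hp1 H hH q hq V hVmeas hVeq hVH hVmin
end
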